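/- Let A₀ be a real p×n matrix, let q ∈ ℝⁿ be a row vector, and let c₁ ≥ 0 be a real constant. Let A₁ be the (p+2)×n matrix obtained by stacking the rows of A₀ together with the rows q and c₁·q, and let A₂ be the (p+1)×n matrix obtained by stacking the rows of A₀ together with the row √(1+c₁²)·q. Then A₁ᵀA₁ = A₂ᵀA₂ and ‖A₁‖₂ = ‖A₂‖₂; consequently, if these matrices have full column rank n, then for every query w ∈ ℝⁿ, ‖A₁‖₂² · wᵀ(A₁ᵀA₁)⁻¹w = ‖A₂‖₂² · wᵀ(A₂ᵀA₂)⁻¹w, i.e., the two strategies are equivalent under the (ε,δ)-matrix mechanism. -/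

import Mathlib

open Matrix BigOperators

/-- The maximum Euclidean (L2) column norm of a matrix (its L2 sensitivity). -/
noncomputable def l2Sens {ι : Type*} [Fintype ι] {n : ℕ} (A : Matrix ι (Fin n) ℝ) : ℝ :=
  ⨆ j, Real.sqrt (∑ i, (A i j) ^ 2)

/-!
Both the Gram matrix `AᵀA` and the L2 sensitivity of a strategy `A` only see its rows through
the sum `∑ᵢ aᵢ aᵢᵀ` of the outer products of its rows (the sensitivity is read off the diagonal).
The rows `q` and `c₁ q` contribute `(1 + c₁²) q qᵀ` to that sum, exactly as the single row
`√(1 + c₁²) q` does, so the two strategies share their Gram matrix and their sensitivity, and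
hence their error on every query.
-/

namespace Matrix

variable {ι κ m R : Type*} [Fintype ι] [Fintype κ]

theorem transpose_mul_self_eq_sum_vecMulVec [CommSemiring R] (A : Matrix ι m R) :
    Aᵀ * A = ∑ i, vecMulVec (A i) (A i) := by
  ext j k
  simp only [mul_apply, transpose_apply, sum_apply, vecMulVec_apply]

theorem transpose_fromRows_mul_fromRows [CommSemiring R] (A : Matrix ι m R) (B : Matrix κ m R) :
    (fromRows A B)ᵀ * fromRows A B = Aᵀ * A + Bᵀ * B := by
  rw [transpose_fromRows, fromCols_mul_fromRows]

theorem transpose_mul_self_diag_eq_sum_sq [CommSemiring R] (A : Matrix ι m R) (j : m) :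
    (Aᵀ * A) j j = ∑ i, A i j ^ 2 := by
  simp only [mul_apply, transpose_apply, sq]

theorem transpose_mul_self_of_pair_smul_eq (q : m → ℝ) (c : ℝ) :
    (of ![q, c • q])ᵀ * of ![q, c • q] =
      (of ![√(1 + c ^ 2) • q])ᵀ * of ![√(1 + c ^ 2) • q] := by
  have hsqrt : √(1 + c ^ 2) * √(1 + c ^ 2) = 1 + c ^ 2 := Real.mul_self_sqrt (by positivity)
  rw [transpose_mul_self_eq_sum_vecMulVec, transpose_mul_self_eq_sum_vecMulVec, Fin.sum_univ_two,
    Fin.sum_univ_one]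
  change vecMulVec q q + vecMulVec (c • q) (c • q) =
    vecMulVec (√(1 + c ^ 2) • q) (√(1 + c ^ 2) • q)
  rw [smul_vecMulVec, vecMulVec_smul, smul_vecMulVec, vecMulVec_smul, smul_smul, smul_smul, hsqrt,
    add_smul, one_smul, sq]

end Matrix

theorem l2Sens_eq_of_transpose_mul_self_eq {ι κ : Type*} [Fintype ι] [Fintype κ] {n : ℕ}
    {A : Matrix ι (Fin n) ℝ} {B : Matrix κ (Fin n) ℝ} (h : Aᵀ * A = Bᵀ * B) :
    l2Sens A = l2Sens B := by
  unfold l2Sens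
  simp only [← transpose_mul_self_diag_eq_sum_sq, h]

theorem redundant_queries_equivalent_general (p n : ℕ)
    (A₀ : Matrix (Fin p) (Fin n) ℝ) (q : Fin n → ℝ) (c₁ : ℝ)
    (A₁ : Matrix (Fin p ⊕ Fin 2) (Fin n) ℝ)
    (A₂ : Matrix (Fin p ⊕ Fin 1) (Fin n) ℝ)
    (hA₁ : A₁ = Matrix.of (Sum.elim A₀ ![q, c₁ • q]))
    (hA₂ : A₂ = Matrix.of (Sum.elim A₀ ![Real.sqrt (1 + c₁ ^ 2) • q])) :
    A₁ᵀ * A₁ = A₂ᵀ * A₂ ∧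
    l2Sens A₁ = l2Sens A₂ ∧
    (A₁.rank = n → A₂.rank = n → ∀ w : Fin n → ℝ,
      (l2Sens A₁) ^ 2 * (w ⬝ᵥ ((A₁ᵀ * A₁)⁻¹).mulVec w)
        = (l2Sens A₂) ^ 2 * (w ⬝ᵥ ((A₂ᵀ * A₂)⁻¹).mulVec w)) := by
  have hG : A₁ᵀ * A₁ = A₂ᵀ * A₂ := by
    change A₁ = fromRows A₀ (of ![q, c₁ • q]) at hA₁
    change A₂ = fromRows A₀ (of ![√(1 + c₁ ^ 2) • q]) at hA₂
    rw [hA₁, hA₂, transpose_fromRows_mul_fromRows, transpose_fromRows_mul_fromRows,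
      transpose_mul_self_of_pair_smul_eq]
  have hS : l2Sens A₁ = l2Sens A₂ := l2Sens_eq_of_transpose_mul_self_eq hG
  exact ⟨hG, hS, fun _ _ w => by rw [hG, hS]⟩

/-- **Redundant queries under the (ε,δ)-matrix mechanism.**
Stacking a query `q` and a scaled copy `c₁ • q` onto a strategy `A₀` is equivalent to
stacking the single row `√(1+c₁²) • q`: the two strategies have equal Gram matrices and
equal L2 sensitivity, hence (when full column rank) equal error on every query. -/
theorem redundant_queries_equivalent (p n : ℕ)
    (A₀ : Matrix (Fin p) (Fin n) ℝ) (q : Fin n → ℝ) (c₁ : ℝ) (hc₁ : 0 ≤ c₁)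
    (A₁ : Matrix (Fin p ⊕ Fin 2) (Fin n) ℝ)
    (A₂ : Matrix (Fin p ⊕ Fin 1) (Fin n) ℝ)
    (hA₁ : A₁ = Matrix.of (Sum.elim A₀ ![q, c₁ • q]))
    (hA₂ : A₂ = Matrix.of (Sum.elim A₀ ![Real.sqrt (1 + c₁ ^ 2) • q])) :
    A₁ᵀ * A₁ = A₂ᵀ * A₂ ∧
    l2Sens A₁ = l2Sens A₂ ∧
    (A₁.rank = n → A₂.rank = n → ∀ w : Fin n → ℝ,
      (l2Sens A₁) ^ 2 * (w ⬝ᵥ ((A₁ᵀ * A₁)⁻¹).mulVec w)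
        = (l2Sens A₂) ^ 2 * (w ⬝ᵥ ((A₂ᵀ * A₂)⁻¹).mulVec w)) :=
  redundant_queries_equivalent_general p n A₀ q c₁ A₁ A₂ hA₁ hA₂
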